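/- arXiv:2209.02620 — 2 statements merged into one kernel-verified Lean document; each statement's English description precedes it below -/
import Mathlib

section
/- For every ε₁ with 0 < ε₁ < 1/16 and every ε₂ with 0 < ε₂ < 1/2, there exists a unique map G : M → M satisfying G(Φ(ρ,θ)) = Φ(ρ + ε₁P(ρ), θ + ε₂ sin 2θ) for all ρ ∈ [1,5] and θ ∈ ℝ, and this map G is a bijection of M onto itself. -/
open Real Set

noncomputable def χ (ρ : ℝ) : ℝ := (7 * ρ - 5) / (ρ + 1)
noncomputable def η (ρ : ℝ) : ℝ := (ρ + 5) / (7 - ρ)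
noncomputable def P (ρ : ℝ) : ℝ := (ρ - 1) * (ρ - 3) ^ 2 * (ρ - 5)

/-- The closed annulus `M = {(x,y) : 1 ≤ x² + y² ≤ 25}`. -/
def Mset : Set (ℝ × ℝ) := {p | 1 ≤ p.1 ^ 2 + p.2 ^ 2 ∧ p.1 ^ 2 + p.2 ^ 2 ≤ 25}

/-- The parametrization `Φ(ρ,θ) = (χ(ρ) cos θ, η(ρ) sin θ)`. -/
noncomputable def Φ (ρ θ : ℝ) : ℝ × ℝ := (χ ρ * Real.cos θ, η ρ * Real.sin θ)

/-- `G : M → M` satisfies `G (Φ ρ θ) = Φ (ρ + ε₁ P(ρ)) (θ + ε₂ sin 2θ)`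
for all `ρ ∈ [1,5]` and all `θ ∈ ℝ`. -/
def IsG (ε₁ ε₂ : ℝ) (G : Mset → Mset) : Prop :=
  ∀ ρ θ : ℝ, ρ ∈ Icc (1:ℝ) 5 →
    ∀ (hm : Φ ρ θ ∈ Mset)
      (hm' : Φ (ρ + ε₁ * P ρ) (θ + ε₂ * Real.sin (2 * θ)) ∈ Mset),
      G ⟨Φ ρ θ, hm⟩ = ⟨Φ (ρ + ε₁ * P ρ) (θ + ε₂ * Real.sin (2 * θ)), hm'⟩

/-!
The ellipses `Φ ρ ·`, `ρ ∈ [1,5]`, foliate the annulus: a point `p ≠ 0` lies on `Φ ρ ·` iff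
`(p.1 / χ ρ)² + (p.2 / η ρ)² = 1`, and the left side is strictly decreasing in `ρ`, from `|p|²`
at `ρ = 1` to `|p|²/25` at `ρ = 5`. So `Φ` identifies `M` with `[1,5] × ℝ/2πℤ`.

The radial map `ρ ↦ ρ + ε₁P(ρ)` has positive derivative and fixes `1` and `5`, so it permutes
`[1,5]`; the angular map `θ ↦ θ + ε₂ sin 2θ` has positive derivative and commutes with
`θ ↦ θ + 2π`, so it permutes `ℝ` and induces a bijection of `ℝ/2πℤ`. Their product therefore
preserves the fibres of `Φ` in both directions, and descends to a unique map of `M`, which is again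
a bijection.
-/

namespace Function

variable {α β : Type*} {p : α → β} {f : α → α}

theorem Surjective.existsUnique_semiconj (hp : Surjective p) (hf : (p ∘ f).FactorsThrough p) :
    ∃! g : β → β, Semiconj p f g :=
  ⟨extend p (p ∘ f) id, fun a => (hf.extend_apply id a).symm, fun _ hg =>
    hp.injective_comp_right <| funext fun a => (hg a).symm.trans (hf.extend_apply id a).symm⟩

theorem Semiconj.bijective {g : β → β} (h : Semiconj p f g) (hp : Surjective p)
    (hf : Surjective f) (hfib : p.FactorsThrough (p ∘ f)) : Bijective g := by
  refine ⟨fun y y' hyy' => ?_, fun y => ?_⟩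
  · obtain ⟨⟨a, rfl⟩, ⟨b, rfl⟩⟩ := And.intro (hp y) (hp y')
    exact hfib (by simpa only [comp_apply, h a, h b] using hyy')
  · obtain ⟨a, rfl⟩ := hp y
    obtain ⟨c, rfl⟩ := hf a
    exact ⟨p c, (h c).symm⟩

end Function

lemma exists_cos_eq_sin_eq {a b : ℝ} (h : a ^ 2 + b ^ 2 = 1) :
    ∃ θ : ℝ, cos θ = a ∧ sin θ = b := by
  obtain ⟨θ, hθ⟩ := (Complex.norm_eq_one_iff ⟨a, b⟩).1 <| by
    rw [Complex.norm_def, Complex.normSq_mk, ← sq, ← sq, h, sqrt_one]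
  exact ⟨θ, by simpa using congrArg Complex.re hθ, by simpa using congrArg Complex.im hθ⟩

lemma Real.Angle.coe_apply_eq_coe_apply_iff {f : ℝ → ℝ} (hf : Function.Injective f)
    (hper : ∀ x (k : ℤ), f (x + 2 * π * k) = f x + 2 * π * k) {x y : ℝ} :
    (f x : Angle) = f y ↔ (x : Angle) = y := by
  simp only [Angle.angle_eq_iff_two_pi_dvd_sub, sub_eq_iff_eq_add']
  refine exists_congr fun k => ⟨fun h => hf ?_, fun h => h ▸ hper y k⟩
  rw [h, hper]

lemma div_sq_le_div_sq (c : ℝ) {s t : ℝ} (hs : 0 < s) (hst : s ≤ t) :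
    (c / t) ^ 2 ≤ (c / s) ^ 2 := by
  rw [div_pow, div_pow]
  exact div_le_div_of_nonneg_left (sq_nonneg c) (by positivity) (pow_le_pow_left₀ hs.le hst 2)

lemma div_sq_lt_div_sq {c s t : ℝ} (hc : c ≠ 0) (hs : 0 < s) (hst : s < t) :
    (c / t) ^ 2 < (c / s) ^ 2 := by
  rw [div_pow, div_pow]
  exact div_lt_div_of_pos_left (by positivity) (by positivity)
    (pow_lt_pow_left₀ hst hs.le two_ne_zero)

lemma StrictMonoOn.bijOn_Icc_self {f : ℝ → ℝ} {a b : ℝ} (hab : a ≤ b)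
    (hf : StrictMonoOn f (Icc a b)) (hcont : ContinuousOn f (Icc a b)) (ha : f a = a)
    (hb : f b = b) : BijOn f (Icc a b) (Icc a b) := by
  refine ⟨?_, hf.injOn, ?_⟩
  · simpa only [ha, hb] using hf.monotoneOn.mapsTo_Icc
  · simpa only [ha, hb] using hcont.surjOn_Icc (left_mem_Icc.2 hab) (right_mem_Icc.2 hab)

lemma χ_strictMonoOn : StrictMonoOn χ (Ioi (-1)) := by
  intro a (ha : -1 < a) b (hb : -1 < b) hab
  rw [χ, χ, div_lt_div_iff₀ (by linarith) (by linarith)]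
  linarith

lemma η_strictMonoOn : StrictMonoOn η (Iio 7) := by
  intro a (ha : a < 7) b (hb : b < 7) hab
  rw [η, η, div_lt_div_iff₀ (by linarith) (by linarith)]
  linarith

lemma χ_mapsTo : MapsTo χ (Icc 1 5) (Icc 1 5) := fun ρ ⟨h₁, h₅⟩ => by
  have hd : (0 : ℝ) < ρ + 1 := by linarith
  exact ⟨by rw [χ, le_div_iff₀ hd]; linarith, by rw [χ, div_le_iff₀ hd]; linarith⟩

lemma η_mapsTo : MapsTo η (Icc 1 5) (Icc 1 5) := fun ρ ⟨h₁, h₅⟩ => by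
  have hd : (0 : ℝ) < 7 - ρ := by linarith
  exact ⟨by rw [η, le_div_iff₀ hd]; linarith, by rw [η, div_le_iff₀ hd]; linarith⟩

lemma mk_mul_cos_mul_sin_mem_Mset {a b : ℝ} (ha : a ∈ Icc 1 5) (hb : b ∈ Icc 1 5) (θ : ℝ) :
    (a * cos θ, b * sin θ) ∈ Mset := by
  obtain ⟨⟨ha₁, ha₅⟩, hb₁, hb₅⟩ := And.intro ha hb
  have hcs := cos_sq_add_sin_sq θ
  have hc := sq_nonneg (cos θ)
  have hs := sq_nonneg (sin θ)
  have ha2 : 1 ≤ a ^ 2 ∧ a ^ 2 ≤ 25 := ⟨by nlinarith, by nlinarith⟩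
  have hb2 : 1 ≤ b ^ 2 ∧ b ^ 2 ≤ 25 := ⟨by nlinarith, by nlinarith⟩
  constructor <;> simp only [mul_pow] <;> nlinarith

lemma Φ_mem_Mset {ρ : ℝ} (hρ : ρ ∈ Icc 1 5) (θ : ℝ) : Φ ρ θ ∈ Mset :=
  mk_mul_cos_mul_sin_mem_Mset (χ_mapsTo hρ) (η_mapsTo hρ) θ

lemma χ_pos {ρ : ℝ} (hρ : ρ ∈ Icc 1 5) : 0 < χ ρ := one_pos.trans_le (χ_mapsTo hρ).1

lemma η_pos {ρ : ℝ} (hρ : ρ ∈ Icc 1 5) : 0 < η ρ := one_pos.trans_le (η_mapsTo hρ).1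

noncomputable def ellipseLevel (p : ℝ × ℝ) (ρ : ℝ) : ℝ := (p.1 / χ ρ) ^ 2 + (p.2 / η ρ) ^ 2

lemma ellipseLevel_Φ {ρ : ℝ} (hρ : ρ ∈ Icc 1 5) (θ : ℝ) : ellipseLevel (Φ ρ θ) ρ = 1 := by
  simp only [ellipseLevel, Φ, mul_div_cancel_left₀ _ (χ_pos hρ).ne',
    mul_div_cancel_left₀ _ (η_pos hρ).ne', cos_sq_add_sin_sq]

lemma continuousOn_ellipseLevel (p : ℝ × ℝ) : ContinuousOn (ellipseLevel p) (Icc 1 5) := by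
  have hχ : ContinuousOn χ (Icc 1 5) :=
    ContinuousOn.div (by fun_prop) (by fun_prop) fun ρ hρ => by linarith [hρ.1]
  have hη : ContinuousOn η (Icc 1 5) :=
    ContinuousOn.div (by fun_prop) (by fun_prop) fun ρ hρ => by linarith [hρ.2]
  exact ((continuousOn_const.div hχ fun ρ hρ => (χ_pos hρ).ne').pow 2).add
    ((continuousOn_const.div hη fun ρ hρ => (η_pos hρ).ne').pow 2)

lemma ellipseLevel_strictAntiOn {p : ℝ × ℝ} (hp : p ≠ 0) :
    StrictAntiOn (ellipseLevel p) (Icc 1 5) := by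
  intro a ha b hb hab
  have hχ : χ a < χ b :=
    χ_strictMonoOn (by linarith [ha.1] : -1 < a) (by linarith [hb.1] : -1 < b) hab
  have hη : η a < η b :=
    η_strictMonoOn (by linarith [ha.2] : a < 7) (by linarith [hb.2] : b < 7) hab
  rcases not_and_or.1 (mt Prod.ext_iff.2 hp) with h | h
  · exact add_lt_add_of_lt_of_le (div_sq_lt_div_sq h (χ_pos ha) hχ)
      (div_sq_le_div_sq _ (η_pos ha) hη.le)
  · exact add_lt_add_of_le_of_lt (div_sq_le_div_sq _ (χ_pos ha) hχ.le)
      (div_sq_lt_div_sq h (η_pos ha) hη)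

lemma exists_Φ_eq {p : ℝ × ℝ} (hp : p ∈ Mset) : ∃ ρ ∈ Icc (1 : ℝ) 5, ∃ θ, Φ ρ θ = p := by
  have hsurj := (continuousOn_ellipseLevel p).surjOn_Icc (a := 5) (b := 1)
    (by norm_num) (by norm_num)
  obtain ⟨ρ, hρ, hlevel⟩ := hsurj (show (1 : ℝ) ∈ _ by
    constructor <;> norm_num [ellipseLevel, χ, η] <;> linarith [hp.1, hp.2])
  obtain ⟨θ, hcos, hsin⟩ := exists_cos_eq_sin_eq hlevel
  refine ⟨ρ, hρ, θ, Prod.ext ?_ ?_⟩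
  · simp only [Φ, hcos, mul_div_cancel₀ _ (χ_pos hρ).ne']
  · simp only [Φ, hsin, mul_div_cancel₀ _ (η_pos hρ).ne']

lemma Φ_eq_Φ_iff {a b θ ψ : ℝ} (ha : a ∈ Icc 1 5) (hb : b ∈ Icc 1 5) :
    Φ a θ = Φ b ψ ↔ a = b ∧ (θ : Angle) = ψ := by
  constructor
  · intro h
    have hnorm := (Φ_mem_Mset ha θ).1
    have hne : Φ a θ ≠ 0 := fun h0 => by norm_num [h0] at hnorm
    have hab : a = b := (ellipseLevel_strictAntiOn hne).injOn ha hb <| by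
      rw [ellipseLevel_Φ ha, h, ellipseLevel_Φ hb]
    subst hab
    refine ⟨rfl, Angle.cos_sin_inj ?_ ?_⟩
    · exact mul_left_cancel₀ (χ_pos ha).ne' (congrArg Prod.fst h)
    · exact mul_left_cancel₀ (η_pos ha).ne' (congrArg Prod.snd h)
  · rintro ⟨rfl, h⟩
    simp only [Φ, ← Angle.cos_coe, ← Angle.sin_coe, h]

noncomputable def radialMap (ε₁ ρ : ℝ) : ℝ := ρ + ε₁ * P ρ

noncomputable def angularMap (ε₂ θ : ℝ) : ℝ := θ + ε₂ * sin (2 * θ)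

lemma P_eq (ρ : ℝ) : P ρ = (ρ - 3) ^ 4 - 4 * (ρ - 3) ^ 2 := by rw [P]; ring

lemma hasDerivAt_P (ρ : ℝ) : HasDerivAt P (4 * (ρ - 3) ^ 3 - 8 * (ρ - 3)) ρ := by
  have h := ((hasDerivAt_id' ρ).sub_const 3).pow 4 |>.sub
    ((((hasDerivAt_id' ρ).sub_const 3).pow 2).const_mul 4)
  rw [funext P_eq]
  exact h.congr_deriv (by norm_num; ring)

-- `4t³ - 8t + 16 = 4(t + 2)((t - 1)² + 1)` with `t = ρ - 3`
lemma neg_sixteen_le_deriv_P {ρ : ℝ} (hρ : 1 ≤ ρ) : -16 ≤ 4 * (ρ - 3) ^ 3 - 8 * (ρ - 3) := by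
  nlinarith [mul_nonneg (sub_nonneg.2 hρ) (sq_nonneg (ρ - 4))]

lemma radialMap_bijOn {ε₁ : ℝ} (hε₁ : 0 < ε₁) (hε₁' : ε₁ < 1 / 16) :
    BijOn (radialMap ε₁) (Icc 1 5) (Icc 1 5) := by
  have hderiv (ρ : ℝ) :
      HasDerivAt (radialMap ε₁) (1 + ε₁ * (4 * (ρ - 3) ^ 3 - 8 * (ρ - 3))) ρ :=
    (hasDerivAt_id ρ).add ((hasDerivAt_P ρ).const_mul ε₁)
  have hcont : Continuous (radialMap ε₁) :=
    continuous_iff_continuousAt.2 fun ρ => (hderiv ρ).continuousAt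
  refine StrictMonoOn.bijOn_Icc_self (by norm_num) ?_ hcont.continuousOn
    (by norm_num [radialMap, P]) (by norm_num [radialMap, P])
  refine strictMonoOn_of_deriv_pos (convex_Icc 1 5) hcont.continuousOn fun ρ hρ => ?_
  rw [interior_Icc] at hρ
  rw [(hderiv ρ).deriv]
  nlinarith [neg_sixteen_le_deriv_P hρ.1.le]

lemma angularMap_bijective {ε₂ : ℝ} (hε₂ : 0 < ε₂) (hε₂' : ε₂ < 1 / 2) :
    Function.Bijective (angularMap ε₂) := by
  have hderiv (θ : ℝ) : HasDerivAt (angularMap ε₂) (1 + ε₂ * (cos (2 * θ) * (2 * 1))) θ :=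
    (hasDerivAt_id' θ).add (((hasDerivAt_id' θ).const_mul 2).sin.const_mul ε₂)
  have hcont : Continuous (angularMap ε₂) :=
    continuous_iff_continuousAt.2 fun θ => (hderiv θ).continuousAt
  refine ⟨StrictMono.injective <| strictMono_of_deriv_pos fun θ => ?_, fun θ => ?_⟩
  · rw [(hderiv θ).deriv]
    nlinarith [neg_one_le_cos (2 * θ)]
  · have hlow : angularMap ε₂ (θ - 1) ≤ θ := by
      simp only [angularMap]; nlinarith [sin_le_one (2 * (θ - 1))]
    have hup : θ ≤ angularMap ε₂ (θ + 1) := by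
      simp only [angularMap]; nlinarith [neg_one_le_sin (2 * (θ + 1))]
    obtain ⟨x, -, hx⟩ := intermediate_value_Icc (by linarith) hcont.continuousOn ⟨hlow, hup⟩
    exact ⟨x, hx⟩

lemma angularMap_add_two_pi_mul (ε₂ θ : ℝ) (k : ℤ) :
    angularMap ε₂ (θ + 2 * π * k) = angularMap ε₂ θ + 2 * π * k := by
  have h : sin (2 * (θ + 2 * π * k)) = sin (2 * θ) := by
    rw [show 2 * (θ + 2 * π * k) = 2 * θ + (2 * k : ℤ) * (2 * π) by push_cast; ring]
    exact sin_add_int_mul_two_pi _ _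
  simp only [angularMap, h]
  ring

noncomputable def ΦM (x : Icc (1 : ℝ) 5 × ℝ) : Mset := ⟨Φ x.1 x.2, Φ_mem_Mset x.1.2 x.2⟩

lemma ΦM_surjective : Function.Surjective ΦM := fun p => by
  obtain ⟨ρ, hρ, θ, h⟩ := exists_Φ_eq p.2
  exact ⟨(⟨ρ, hρ⟩, θ), Subtype.ext h⟩

lemma ΦM_eq_ΦM_iff {x y : Icc (1 : ℝ) 5 × ℝ} :
    ΦM x = ΦM y ↔ x.1 = y.1 ∧ (x.2 : Angle) = y.2 := by
  rw [ΦM, ΦM, Subtype.mk.injEq, Φ_eq_Φ_iff x.1.2 y.1.2, Subtype.ext_iff]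

lemma isG_iff_semiconj {ε₁ ε₂ : ℝ} (h : MapsTo (radialMap ε₁) (Icc 1 5) (Icc 1 5))
    (G : Mset → Mset) :
    IsG ε₁ ε₂ G ↔ Function.Semiconj ΦM (Prod.map (h.restrict _ _ _) (angularMap ε₂)) G :=
  ⟨fun hG x => (hG x.1 x.2 x.1.2 _ _).symm, fun hG ρ θ hρ _ _ => (hG (⟨ρ, hρ⟩, θ)).symm⟩

theorem stmt6 (ε₁ ε₂ : ℝ) (hε₁ : 0 < ε₁) (hε₁' : ε₁ < 1 / 16)
    (hε₂ : 0 < ε₂) (hε₂' : ε₂ < 1 / 2) :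
    (∃! G : Mset → Mset, IsG ε₁ ε₂ G) ∧
    (∀ G : Mset → Mset, IsG ε₁ ε₂ G → Function.Bijective G) := by
  have hρ := radialMap_bijOn hε₁ hε₁'
  have hθ := angularMap_bijective hε₂ hε₂'
  set F := Prod.map (hρ.mapsTo.restrict _ _ _) (angularMap ε₂)
  have hF : Function.Bijective F := hρ.bijective.prodMap hθ
  have hfib (x y : Icc (1 : ℝ) 5 × ℝ) : ΦM (F x) = ΦM (F y) ↔ ΦM x = ΦM y := by
    rw [ΦM_eq_ΦM_iff, ΦM_eq_ΦM_iff]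
    exact and_congr hρ.bijective.1.eq_iff
      (Angle.coe_apply_eq_coe_apply_iff hθ.1 (angularMap_add_two_pi_mul ε₂))
  simp only [isG_iff_semiconj hρ.mapsTo]
  exact ⟨ΦM_surjective.existsUnique_semiconj fun x y h => (hfib x y).2 h,
    fun G hG => hG.bijective ΦM_surjective hF.2 fun x y h => (hfib x y).1 h⟩
end

section
/- Fix n ≥ 2, p⁰ ∈ ℝⁿ, ε ≠ 0, and k = 3, and let φ : ℝⁿ → ℝⁿ × ℝⁿ be φ(q) = (p⁰ + εf(q₁), q) with f(t) = (sin³ t, cos t, 0, …, 0). Let a, b ∈ ℝ with ab ≠ 0. Then for every q ∈ ℝⁿ, the vector ((b cos q₁)e₁, a e₁) ∈ ℝⁿ × ℝⁿ (where e₁ is the first standard basis vector of ℝⁿ) does not lie in the range of the derivative Dφ(q); that is, the Hamiltonian vector field V = a∂_{q₁} + b(cos q₁)∂_{p₁} with Hamilton function ap₁ − b sin q₁ is nowhere tangent to the torus L₀ = φ(ℝⁿ). -/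
open Real

/-- `f(t) = (sin^k t, cos t, 0, …, 0) ∈ ℝⁿ` (here `n = m + 2 ≥ 2`). -/
noncomputable def f (m k : ℕ) (t : ℝ) : Fin (m + 2) → ℝ :=
  fun i => if i = 0 then Real.sin t ^ k else if i = 1 then Real.cos t else 0

/-- The derivative `f'(t) = (k sin^(k-1) t cos t, −sin t, 0, …, 0)`. -/
noncomputable def f' (m k : ℕ) (t : ℝ) : Fin (m + 2) → ℝ :=
  fun i => if i = 0 then (k : ℝ) * Real.sin t ^ (k - 1) * Real.cos t
    else if i = 1 then -Real.sin t else 0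

/-- The parametrization `φ(q) = (p⁰ + ε f(q₁), q)` of the torus `L₀`. -/
noncomputable def φ (m k : ℕ) (p0 : Fin (m + 2) → ℝ) (ε : ℝ)
    (q : Fin (m + 2) → ℝ) : (Fin (m + 2) → ℝ) × (Fin (m + 2) → ℝ) :=
  (fun i => p0 i + ε * f m k (q 0) i, q)

/-- The derivative of `φ` at `q`:  `Dφ(q) u = (ε f'(q₁) u₁, u)`. -/
noncomputable def Dφ (m k : ℕ) (ε : ℝ) (q u : Fin (m + 2) → ℝ) :
    (Fin (m + 2) → ℝ) × (Fin (m + 2) → ℝ) :=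
  (fun i => ε * f' m k (q 0) i * u 0, u)

lemma f'_one (m k : ℕ) (t : ℝ) : f' m k t 1 = -sin t := by
  simp [f']

lemma f'_zero_eq_zero_of_sin_eq_zero (m : ℕ) {k : ℕ} (hk : 2 ≤ k) {t : ℝ} (h : sin t = 0) :
    f' m k t 0 = 0 := by
  simp [f', h, Nat.sub_ne_zero_of_lt hk]

lemma Real.cos_ne_zero_of_sin_eq_zero {t : ℝ} (h : sin t = 0) : cos t ≠ 0 := by
  intro hc
  simpa [h, hc] using sin_sq_add_cos_sq t

/-- Tangency forces `sin q₁ = 0`; there the first coordinate of `f'` vanishes as `k ≥ 2`,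
while `cos q₁ = ±1`. -/
theorem hamiltonian_field_not_mem_range_Dφ (m : ℕ) {k : ℕ} (hk : 2 ≤ k) {ε : ℝ} (hε : ε ≠ 0)
    {a b : ℝ} (hab : a * b ≠ 0) (q : Fin (m + 2) → ℝ) :
    ((fun i => if i = 0 then b * cos (q 0) else 0), (fun i => if i = 0 then a else (0 : ℝ)))
      ∉ Set.range (Dφ m k ε q) := by
  rintro ⟨u, hu⟩
  obtain ⟨ha, hb⟩ := mul_ne_zero_iff.mp hab
  have hu0 : u 0 = a := by simpa [Dφ] using congrFun (congrArg Prod.snd hu) 0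
  have hp1 := congrFun (congrArg Prod.fst hu) 1
  have hp0 := congrFun (congrArg Prod.fst hu) 0
  simp only [Dφ, f'_one, hu0] at hp1 hp0
  have hsin : sin (q 0) = 0 := by simpa [hε, ha] using hp1
  rw [f'_zero_eq_zero_of_sin_eq_zero m hk hsin] at hp0
  have hbcos : b * cos (q 0) = 0 := by simpa using hp0.symm
  exact mul_ne_zero hb (cos_ne_zero_of_sin_eq_zero hsin) hbcos

theorem stmt13_general (m : ℕ) (ε : ℝ) (hε : ε ≠ 0)
    (a b : ℝ) (hab : a * b ≠ 0) (q : Fin (m + 2) → ℝ) :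
    ((fun i => if i = 0 then b * Real.cos (q 0) else 0),
      (fun i => if i = 0 then a else (0 : ℝ)))
      ∉ Set.range (Dφ m 3 ε q) :=
  hamiltonian_field_not_mem_range_Dφ m (by norm_num) hε hab q

theorem stmt13 (m : ℕ) (p0 : Fin (m + 2) → ℝ) (ε : ℝ) (hε : ε ≠ 0)
    (a b : ℝ) (hab : a * b ≠ 0) (q : Fin (m + 2) → ℝ) :
    ((fun i => if i = 0 then b * Real.cos (q 0) else 0),
      (fun i => if i = 0 then a else (0 : ℝ)))
      ∉ Set.range (Dφ m 3 ε q) :=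
  stmt13_general m ε hε a b hab q
end
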